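/- For the diamond K_4 \ {e} (the complete graph K_4 with one edge deleted), QEC(K_4 \ {e}) = -1/2. -/
import Mathlib

/-- QEC(K_4 \ {e}) = -1/2 for the diamond, where the deleted edge is
between the last two vertices (which are thus at distance 2). -/
theorem qec_diamond :
    IsGreatest {x : ℝ | ∃ f : Fin 4 → ℝ,
      (∑ i, f i ^ 2) = 1 ∧ (∑ i, f i) = 0 ∧
      x = ∑ i, ∑ j,
        (if i = j then (0 : ℝ)
         else if (i = 2 ∧ j = 3) ∨ (i = 3 ∧ j = 2) then 2 else 1) * f i * f j}
      (-1/2) := by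
  constructor
  · refine ⟨![-1/2, -1/2, 1/2, 1/2], ?_, ?_, ?_⟩ <;>
      simp [Fin.sum_univ_four] <;> norm_num
  · rintro x ⟨f, h1, h2, rfl⟩
    simp only [Fin.sum_univ_four] at h1 h2 ⊢
    simp only [show ((0:Fin 4)=2)=False from by decide, show ((0:Fin 4)=3)=False from by decide,
      show ((1:Fin 4)=2)=False from by decide, show ((1:Fin 4)=3)=False from by decide,
      show ((2:Fin 4)=3)=False from by decide, show ((3:Fin 4)=2)=False from by decide,
      show ((2:Fin 4)=0)=False from by decide, show ((2:Fin 4)=1)=False from by decide,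
      show ((3:Fin 4)=0)=False from by decide, show ((3:Fin 4)=1)=False from by decide,
      show ((0:Fin 4)=1)=False from by decide, show ((1:Fin 4)=0)=False from by decide,
      show ((0:Fin 4)=0)=True from by decide, show ((1:Fin 4)=1)=True from by decide,
      show ((2:Fin 4)=2)=True from by decide, show ((3:Fin 4)=3)=True from by decide,
      and_self, false_and, and_false, true_and, and_true, false_or, or_false,
      if_false, if_true, ite_false, ite_true]
    have hs : f 0 + f 1 = -(f 2 + f 3) := by linarith
    have h4 : (f 0 + f 1)^2 = (f 2 + f 3)^2 := by rw [hs]; ring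
    nlinarith [sq_nonneg (f 0 - f 1), sq_nonneg (f 2 - f 3), h4]
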